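/- For every dominant ω ∈ ℤⁿ, the vector g(ω) defined above is again dominant, i.e. g(ω)_1 ≥ g(ω)_2 ≥ … ≥ g(ω)_n, and moreover for each ℓ ≥ 0 the number a_ℓ = Σ_{i=1}^n (g^ℓ(ω)_i − g^{ℓ+1}(ω)_i) is even. -/

import Mathlib

/-- First step of the operation: `ω′₁ = ω₁`; for `i ≥ 2`, `ω′ᵢ = ω_{i−1}` if
`ω_{i−1} − ωᵢ` is even and `ω′ᵢ = ω_{i−1} − 1` otherwise (0-indexed here). -/
def gAux (ω : ℕ → ℤ) : ℕ → ℤ := fun i =>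
  if i = 0 then ω 0
  else if (ω (i - 1) - ω i) % 2 = 0 then ω (i - 1) else ω (i - 1) - 1

/-- `X = {i : 2 ≤ i ≤ n, ω_{i−1} ≠ ω′ᵢ}` (0-indexed: `1 ≤ i < n`). -/
def gSet (n : ℕ) (ω : ℕ → ℤ) : Finset ℕ :=
  (Finset.Ico 1 n).filter fun i => ω (i - 1) ≠ gAux ω i

/-- `X′ = X` if `#X` is even, and `X` minus its maximal element otherwise. -/
def gSet' (n : ℕ) (ω : ℕ → ℤ) : Finset ℕ :=
  if Even (gSet n ω).card then gSet n ω
  else (gSet n ω).erase (WithBot.unbotD 0 (gSet n ω).max)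

/-- The map `g : ℤⁿ → ℤⁿ`: `g(ω)ᵢ = ω′ᵢ + 1` if `i ∈ X′` and `g(ω)ᵢ = ω′ᵢ` otherwise. -/
def gMap (n : ℕ) (ω : ℕ → ℤ) : ℕ → ℤ := fun i =>
  if i ∈ gSet' n ω then gAux ω i + 1 else gAux ω i

lemma gSet'_subset (n : ℕ) (ω : ℕ → ℤ) : gSet' n ω ⊆ gSet n ω := by
  unfold gSet'
  split_ifs
  · exact subset_rfl
  · exact Finset.erase_subset _ _

lemma gSet'_mem_range (n : ℕ) (ω : ℕ → ℤ) {i : ℕ} (h : i ∈ gSet' n ω) :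
    1 ≤ i ∧ i < n := by
  have := Finset.mem_Ico.mp (Finset.mem_filter.mp (gSet'_subset n ω h)).1
  exact this

lemma gAux_zero (ω : ℕ → ℤ) : gAux ω 0 = ω 0 := by simp [gAux]

lemma gAux_le (ω : ℕ → ℤ) (i : ℕ) (hi : i ≠ 0) : gAux ω i ≤ ω (i - 1) := by
  simp only [gAux, if_neg hi]
  split_ifs <;> omega

lemma le_gAux (ω : ℕ → ℤ) (i : ℕ) (hi : i ≠ 0) (h : ω i ≤ ω (i - 1)) :
    ω i ≤ gAux ω i := by
  simp only [gAux, if_neg hi]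
  split_ifs with h2 <;> omega

lemma gAux_le_gMap (n : ℕ) (ω : ℕ → ℤ) (i : ℕ) : gAux ω i ≤ gMap n ω i := by
  unfold gMap; split_ifs <;> omega

lemma gMap_le (n : ℕ) (ω : ℕ → ℤ) (i : ℕ) (hi : i ≠ 0) :
    gMap n ω i ≤ ω (i - 1) := by
  unfold gMap
  split_ifs with h
  · have hne : ω (i - 1) ≠ gAux ω i :=
      (Finset.mem_filter.mp (gSet'_subset n ω h)).2
    have : gAux ω i = ω (i - 1) - 1 := by
      simp only [gAux, if_neg hi] at hne ⊢
      split_ifs at hne ⊢ with h2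
      · exact absurd rfl hne
      · rfl
    omega
  · exact gAux_le ω i hi

lemma gMap_zero (n : ℕ) (ω : ℕ → ℤ) : gMap n ω 0 = ω 0 := by
  unfold gMap
  rw [if_neg, gAux_zero]
  intro h
  exact absurd (gSet'_mem_range n ω h).1 (by omega)

lemma even_sub_gAux (ω : ℕ → ℤ) (i : ℕ) : Even (ω i - gAux ω i) := by
  rcases eq_or_ne i 0 with rfl | hi
  · rw [gAux_zero]; simp
  · rw [Int.even_iff]
    simp only [gAux, if_neg hi]
    split_ifs with h <;> omega

lemma even_card_gSet' (n : ℕ) (ω : ℕ → ℤ) : Even (gSet' n ω).card := by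
  unfold gSet'
  split_ifs with h
  · exact h
  · have hne : (gSet n ω).Nonempty := by
      rw [Finset.nonempty_iff_ne_empty]
      intro he
      rw [he] at h
      simp at h
    obtain ⟨m, hm⟩ := Finset.max_of_nonempty hne
    have hmem : m ∈ gSet n ω := Finset.mem_of_max hm
    rw [hm]
    simp only [WithBot.unbotD_coe]
    rw [Finset.card_erase_of_mem hmem]
    exact Nat.Odd.sub_odd (Nat.not_even_iff_odd.mp h) odd_one

lemma even_sum_gMap (n : ℕ) (ω : ℕ → ℤ) :
    Even (∑ i ∈ Finset.range n, (ω i - gMap n ω i)) := by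
  have key : ∀ i ∈ Finset.range n, ω i - gMap n ω i
      = (ω i - gAux ω i) - (if i ∈ gSet' n ω then (1 : ℤ) else 0) := by
    intro i _
    unfold gMap
    split_ifs <;> ring
  rw [Finset.sum_congr rfl key, Finset.sum_sub_distrib]
  apply Even.sub
  · exact Finset.even_sum _ fun i _ => even_sub_gAux ω i
  · have hsub : gSet' n ω ⊆ Finset.range n := fun x hx =>
      Finset.mem_range.mpr (gSet'_mem_range n ω hx).2
    rw [Finset.sum_ite_mem, Finset.inter_eq_right.mpr hsub]
    simp only [Finset.sum_const, nsmul_eq_mul, mul_one]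
    exact (Int.even_coe_nat _).mpr (even_card_gSet' n ω)

/-- `j(ω) = #{ℓ < n : ω_ℓ ≡ ω₁ (mod 2)}`. -/
def jCount (n : ℕ) (ω : ℕ → ℤ) : ℕ :=
  ((Finset.range n).filter fun ℓ => ω ℓ % 2 = ω 0 % 2).card

/-- For every dominant `ω ∈ ℤⁿ`, the vector `g(ω)` is again dominant, and for each
`ℓ ≥ 0` the number `a_ℓ = Σ_{i=1}^n (g^ℓ(ω)ᵢ − g^{ℓ+1}(ω)ᵢ)` is even. -/
theorem gMap_dominant_and_even (n : ℕ) (ω : ℕ → ℤ)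
    (hdom : ∀ i : ℕ, i + 1 < n → ω (i + 1) ≤ ω i) :
    (∀ i : ℕ, i + 1 < n → gMap n ω (i + 1) ≤ gMap n ω i) ∧
      ∀ ℓ : ℕ, Even (∑ i ∈ Finset.range n,
        ((gMap n)^[ℓ] ω i - (gMap n)^[ℓ + 1] ω i)) := by
  constructor
  · intro i hi
    cases i with
    | zero =>
      rw [gMap_zero]
      simpa using gMap_le n ω 1 one_ne_zero
    | succ j =>
      have h1 : gMap n ω (j + 2) ≤ ω (j + 1) := by
        simpa using gMap_le n ω (j + 2) (by omega)
      have hd : ω (j + 1) ≤ ω j := hdom j (by omega)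
      have h2 : ω (j + 1) ≤ gAux ω (j + 1) := by
        simpa using le_gAux ω (j + 1) (by omega) (by simpa using hd)
      have h3 := gAux_le_gMap n ω (j + 1)
      show gMap n ω (j + 2) ≤ gMap n ω (j + 1)
      omega
  · intro ℓ
    have : ∀ i ∈ Finset.range n,
        (gMap n)^[ℓ] ω i - (gMap n)^[ℓ + 1] ω i
          = (gMap n)^[ℓ] ω i - gMap n ((gMap n)^[ℓ] ω) i := by
      intro i _
      rw [Function.iterate_succ_apply']
    rw [Finset.sum_congr rfl this]
    exact even_sum_gMap n ((gMap n)^[ℓ] ω)
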